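/- If a counterfactual x' lies in the trust region and the density-variance correlation holds in quantitative form σ²_M(x) ≤ φ(p(x|y*)) for a nonincreasing function φ, then for the threshold τ, every x' ∈ X_trust(y*; τ) satisfies the robustness bound Rob(x') ≥ 1 − φ(τ p_ref)/(φ(τ p_ref) + (μ(x') − t)²), provided μ(x') > t. -/

import Mathlib

open MeasureTheory ProbabilityTheory

-- Cantelli: P(X ≤ t) ≤ V/(V+c²)
lemma cantelli {Ω : Type*} [MeasureSpace Ω] [IsProbabilityMeasure (ℙ : Measure Ω)]
    (X : Ω → ℝ) (hmem : MemLp X 2) (t : ℝ) (hμ : t < ∫ ω, X ω) :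
    (ℙ {ω | X ω ≤ t}).toReal ≤
      variance X ℙ / (variance X ℙ + ((∫ ω, X ω) - t) ^ 2) := by
  set m := ∫ ω, X ω with hm
  set V := variance X ℙ with hV
  have hVnn : 0 ≤ V := variance_nonneg _ _
  set c := m - t with hc
  have hc0 : 0 < c := sub_pos.2 hμ
  set u := V / c with hu
  have hu0 : 0 ≤ u := div_nonneg hVnn hc0.le
  set f := fun ω => (m - X ω + u) ^ 2 with hf
  have hg : MemLp (fun ω => m - X ω + u) 2 := by
    exact ((memLp_const m).sub hmem).add (memLp_const u)
  have hfint : Integrable f := by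
    simpa [hf, sq] using hg.integrable_sq
  have hXint : Integrable X := hmem.integrable one_le_two
  have hfval : ∫ ω, f ω = V + u ^ 2 := by
    have h1 : ∀ ω, f ω = (X ω - m) ^ 2 + (-2 * u) * X ω + (u ^ 2 + 2 * m * u) := by
      intro ω; simp only [hf]; ring
    have hsq : Integrable (fun ω => (X ω - m) ^ 2) := by
      simpa [sq] using (hmem.sub (memLp_const m)).integrable_sq
    have hVe : V = ∫ ω, (X ω - m)^2 := by
      rw [hV, variance_eq_integral hmem.aestronglyMeasurable.aemeasurable]
    have e1 : ∫ ω, ((X ω - m) ^ 2 + -2 * u * X ω) + (u ^ 2 + 2 * m * u) =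
        (∫ ω, (X ω - m) ^ 2 + -2 * u * X ω) + ∫ _ω : Ω, (u ^ 2 + 2 * m * u) :=
      integral_add (hsq.add (hXint.const_mul _)) (integrable_const _)
    have e2 : ∫ ω, (X ω - m) ^ 2 + -2 * u * X ω =
        (∫ ω, (X ω - m) ^ 2) + ∫ ω, -2 * u * X ω :=
      integral_add hsq (hXint.const_mul _)
    have : ∫ ω, f ω = (∫ ω, (X ω - m)^2) + (-2*u) * m + (u^2 + 2*m*u) := by
      simp only [h1]
      rw [e1, e2, integral_const_mul, integral_const]
      simp [← hm]
    rw [this, ← hVe]; ring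
  have hmarkov := mul_meas_ge_le_integral_of_nonneg
    (μ := (ℙ : Measure Ω)) (f := f) (Filter.Eventually.of_forall fun ω => sq_nonneg _)
    hfint ((c + u) ^ 2)
  have hsub : {ω | X ω ≤ t} ⊆ {ω | (c + u) ^ 2 ≤ f ω} := by
    intro ω hω
    have h1 : c + u ≤ m - X ω + u := by
      simp only [Set.mem_setOf_eq] at hω; simp only [hc]; linarith
    exact pow_le_pow_left₀ (by positivity) h1 2
  have hmono : (ℙ {ω | X ω ≤ t}).toReal ≤ (ℙ {ω | (c + u) ^ 2 ≤ f ω}).toReal :=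
    ENNReal.toReal_mono (measure_ne_top _ _) (measure_mono hsub)
  have hcu : 0 < (c + u) ^ 2 := by positivity
  have key : (ℙ {ω | X ω ≤ t}).toReal ≤ (V + u ^ 2) / (c + u) ^ 2 := by
    rw [← hfval]
    calc (ℙ {ω | X ω ≤ t}).toReal ≤ (ℙ {ω | (c + u) ^ 2 ≤ f ω}).toReal := hmono
    _ ≤ (∫ ω, f ω) / (c + u) ^ 2 := by
        rw [le_div_iff₀ hcu, mul_comm]; exact hmarkov
  refine key.trans (le_of_eq ?_)
  have hden : V + c ^ 2 ≠ 0 := by positivity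
  rw [hu]
  field_simp
  ring

/-- If `σ²_M(x) ≤ φ(p(x|y*))` for a nonincreasing `φ`, then every
counterfactual `x'` in the trust region `{x : p(x|y*) ≥ τ p_ref}` with mean confidence
`μ(x') > t` satisfies `Rob(x') ≥ 1 - φ(τ p_ref)/(φ(τ p_ref) + (μ(x') - t)²)`. -/
theorem stmt_18 {Ω : Type*} [MeasureSpace Ω] [IsProbabilityMeasure (ℙ : Measure Ω)]
    {X : Type*} (s : Ω → X → ℝ) (p : X → ℝ) (φ : ℝ → ℝ)
    (hφ : AntitoneOn φ (Set.Ioi 0)) (hφnn : ∀ v, 0 ≤ φ v)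
    (t τ p_ref : ℝ) (hτ : 0 < τ) (hpref : 0 < p_ref) (x' : X)
    (hmem : MemLp (fun ω => s ω x') 2)
    (hvar : variance (fun ω => s ω x') ℙ ≤ φ (p x'))
    (htrust : τ * p_ref ≤ p x')
    (hμ : t < ∫ ω, s ω x') :
    1 - φ (τ * p_ref) / (φ (τ * p_ref) + ((∫ ω, s ω x') - t) ^ 2)
      ≤ (ℙ {ω | t < s ω x'}).toReal := by
  set Y := fun ω => s ω x' with hY
  set m := ∫ ω, Y ω with hm
  set V := variance Y ℙ with hV
  set W := φ (τ * p_ref) with hW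
  set c := m - t with hc
  have hc0 : 0 < c := sub_pos.2 hμ
  have hVnn : 0 ≤ V := variance_nonneg _ _
  have hT : 0 < τ * p_ref := by positivity
  have hφle : φ (p x') ≤ W :=
    hφ (Set.mem_Ioi.2 hT) (Set.mem_Ioi.2 (lt_of_lt_of_le hT htrust)) htrust
  have hVle : V ≤ W := le_trans hvar hφle
  have hWnn : 0 ≤ W := hφnn _
  have hcant := cantelli Y hmem t hμ
  have hns : NullMeasurableSet {ω | Y ω ≤ t} ℙ :=
    hmem.aestronglyMeasurable.aemeasurable.nullMeasurable measurableSet_Iic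
  have hcompl : (ℙ {ω | t < Y ω}).toReal = 1 - (ℙ {ω | Y ω ≤ t}).toReal := by
    have hset : {ω | t < Y ω} = {ω | Y ω ≤ t}ᶜ := by ext ω; simp [not_le]
    rw [hset, measure_compl₀ hns (measure_ne_top _ _), measure_univ,
      ENNReal.toReal_sub_of_le prob_le_one ENNReal.one_ne_top, ENNReal.toReal_one]
  rw [hcompl]
  have hmono : V / (V + c ^ 2) ≤ W / (W + c ^ 2) := by
    rw [div_le_div_iff₀ (by positivity) (by positivity)]
    nlinarith [sq_nonneg c]
  linarith [hcant.trans hmono]
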